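/- Let k be a field of characteristic p > 0, fix an algebraic closure k̄ of k, and let k' ⊆ k̄ be a finite extension of k^{p^∞}. Let kk' denote the compositum of k and k' inside k̄. Then the maximal perfect subfield of kk' equals k', i.e. (kk')^{p^∞} = k'. -/

import Mathlib

/-!
Since `k'` is finite over the perfect field `k^{p^∞}`, it is perfect, so `(kk')^{pⁿ} = k^{pⁿ} k'`
and `(kk')^{p^∞} = ⋂ₙ k^{pⁿ} k'`. If `T` is a finite subset of `k'` spanning it over `k^{p^∞}`,
then `k^{pⁿ} k'` is the `k^{pⁿ}`-span of `T`. For a decreasing chain of fields `Lₙ`, the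
`Lₙ`-spans of a finite family `v` intersect in its `⋂ₙ Lₙ`-span: a subfamily of maximal size
that is independent over some `L_N` spans `v` over every `Lₙ` with `n ≥ N`, and coordinates
with respect to it are unique. Hence `⋂ₙ k^{pⁿ} k'` is the `k^{p^∞}`-span of `T`, which is `k'`.
-/

/-- For a subfield `k` of an ambient field `Ω` of characteristic `p > 0`, the maximal perfect
subfield `k^{p^∞} = ⋂ₙ k^{pⁿ}` of `k`, viewed as a subfield of `Ω`; here `k^{pⁿ}` is the image
of `k` under the `n`-fold Frobenius `x ↦ x^{pⁿ}`. -/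
noncomputable def relMaxPerfect (p : ℕ) (Ω : Type*) [Field Ω] [Fact p.Prime] [CharP Ω p]
    (k : Subfield Ω) : Subfield Ω :=
  ⨅ n : ℕ, k.map (iterateFrobenius Ω p n)

open Submodule Set

section SubfieldSpan

variable {Ω V ι : Type*} [Field Ω] [AddCommGroup V] [Module Ω V]

theorem LinearIndependent.restrict_scalars_of_le {K L : Subfield Ω} (h : K ≤ L) {v : ι → V}
    (hv : LinearIndependent L v) : LinearIndependent K v :=
  hv.map_of_injective_injectiveₛ (Subfield.inclusion h) (AddMonoidHom.id V)
    (Subfield.inclusion h).injective Function.injective_id fun _ _ => rfl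

theorem span_subset_span_of_le {K L : Subfield Ω} (h : K ≤ L) (s : Set V) :
    (span K s : Set V) ⊆ span L s := fun x hx => by
  induction hx using Submodule.span_induction with
  | mem x hx => exact subset_span hx
  | zero => exact zero_mem _
  | add x y _ _ hx hy => exact add_mem hx hy
  | smul a x _ hx => exact (span L s).smul_mem (Subfield.inclusion h a) hx

theorem LinearIndependent.coeff_mem_of_mem_span {K L : Subfield Ω} (h : K ≤ L) {v : ι → V}
    (hv : LinearIndependent L v) {c : ι →₀ L}
    (hc : Finsupp.linearCombination L v c ∈ span K (range v)) (i : ι) : (c i : Ω) ∈ K := by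
  obtain ⟨g, hg⟩ := Finsupp.mem_span_range_iff_exists_finsupp.1 hc
  have : g.mapRange (Subfield.inclusion h) (map_zero _) = c := hv (by
    rw [← hg]
    simp only [Finsupp.linearCombination_apply, zero_smul, implies_true,
      Finsupp.sum_mapRange_index]
    rfl)
  rw [← this]
  exact (g i).2

theorem exists_linearIndepOn_range_subset_span [Finite ι] {L : ℕ → Subfield Ω}
    (hL : Antitone L) (v : ι → V) :
    ∃ N, ∃ S : Set ι, LinearIndepOn (L N) v S ∧ ∀ n, N ≤ n → range v ⊆ span (L n) (v '' S) := by
  classical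
  have := Fintype.ofFinite ι
  -- Take `S` of maximal size among the subfamilies independent over some `L N`; independence
  -- survives shrinking the field, so over each `L n` with `n ≥ N` nothing can be added to `S`.
  obtain ⟨S, hS, hmax⟩ := (Finset.univ.filter fun S : Finset ι => ∃ n, LinearIndepOn (L n) v S)
    |>.exists_max_image Finset.card ⟨∅, by simp⟩
  obtain ⟨N, hN⟩ := (Finset.mem_filter.1 hS).2
  refine ⟨N, S, hN, fun n hn => ?_⟩
  rintro _ ⟨j, rfl⟩
  by_contra hj
  have hjS : j ∉ S := fun h => hj (subset_span (mem_image_of_mem v h))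
  have hins : LinearIndepOn (L n) v (insert j S : Finset ι) := by
    rw [Finset.coe_insert, linearIndepOn_insert (Finset.mem_coe.not.2 hjS)]
    exact ⟨LinearIndependent.restrict_scalars_of_le (hL hn) hN, hj⟩
  have := hmax _ (Finset.mem_filter.2 ⟨Finset.mem_univ _, n, hins⟩)
  rw [Finset.card_insert_of_notMem hjS] at this
  omega

theorem iInter_span_eq_span_iInf_of_antitone [Finite ι] {L : ℕ → Subfield Ω}
    (hL : Antitone L) (v : ι → V) :
    ⋂ n, (span (L n) (range v) : Set V) = span ↥(⨅ n, L n) (range v) := by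
  refine Subset.antisymm (fun x hx => ?_)
    (subset_iInter fun n => span_subset_span_of_le (iInf_le L n) _)
  obtain ⟨N, S, hS, hspan⟩ := exists_linearIndepOn_range_subset_span hL v
  have hxS : ∀ n, N ≤ n → x ∈ span (L n) (range fun i : S => v i) := fun n hn => by
    rw [← image_eq_range]
    exact span_le.2 (hspan n hn) (mem_iInter.1 hx n)
  -- The coordinates of `x` in the `L N`-independent family `S` are unique, and `x` has
  -- coordinates in every `L n ⊆ L N`, so they lie in all the `L n`.
  obtain ⟨c, rfl⟩ := Finsupp.mem_span_range_iff_exists_finsupp.1 (hxS N le_rfl)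
  have hc : ∀ i, (c i : Ω) ∈ ⨅ n, L n := fun i => Subfield.mem_iInf.2 fun n => by
    rcases le_total n N with h | h
    · exact hL h (c i).2
    · exact hS.coeff_mem_of_mem_span (hL h) (hxS n h) i
  refine span_mono (range_comp_subset_range ((↑) : S → ι) v) (sum_mem fun i _ => ?_)
  exact smul_mem _ (⟨c i, hc i⟩ : ↥(⨅ n, L n)) (subset_span (mem_range_self i))

end SubfieldSpan

section SubfieldSup

variable {Ω : Type*} [Field Ω]

theorem Subfield.span_subset {K M : Subfield Ω} (h : K ≤ M) {s : Set Ω} (hs : s ⊆ M) :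
    (span K s : Set Ω) ⊆ M := fun x hx => by
  induction hx using span_induction with
  | mem x hx => exact hs hx
  | zero => exact M.zero_mem
  | add x y _ _ hx hy => exact M.add_mem hx hy
  | smul a x _ hx => exact M.mul_mem (h a.2) hx

theorem Subfield.sup_subset_span (L M : Subfield Ω) {T : Set Ω} (hT : T.Finite) (hTM : T ⊆ M)
    (hM : (M : Set Ω) ⊆ span L T) : ((L ⊔ M : Subfield Ω) : Set Ω) ⊆ span L T := by
  have hmul : span L T * span L T ≤ span L T := by
    rw [span_mul_span, span_le]
    rintro _ ⟨a, ha, b, hb, rfl⟩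
    exact hM (mul_mem (hTM ha) (hTM hb))
  let A : Subalgebra L Ω :=
    (span L T).toSubalgebra (hM M.one_mem) fun _ _ hx hy => hmul (mul_mem_mul hx hy)
  -- A domain finite over `L` is a field.
  have hA : ∀ x ∈ A, x⁻¹ ∈ A := fun x hx => A.inv_mem_of_algebraic (x := ⟨x, hx⟩)
    (IsIntegral.of_mem_of_fg A (fg_span hT) x hx).isAlgebraic
  exact (sup_le (fun a ha => A.algebraMap_mem ⟨a, ha⟩) hM :
    L ⊔ M ≤ (A.toIntermediateField hA).toSubfield)

theorem Subfield.iInf_sup_le_of_antitone {L : ℕ → Subfield Ω} (hL : Antitone L)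
    (M : Subfield Ω) (hLM : ⨅ n, L n ≤ M) {T : Set Ω} (hT : T.Finite) (hTM : T ⊆ M)
    (hM : (M : Set Ω) ⊆ span ↥(⨅ n, L n) T) : ⨅ n, (L n ⊔ M) ≤ M := by
  intro x hx
  have := hT.to_subtype
  have hxL : ∀ n, x ∈ span (L n) T := fun n =>
    sup_subset_span (L n) M hT hTM (hM.trans (span_subset_span_of_le (iInf_le L n) T))
      (Subfield.mem_iInf.1 hx n)
  have hxF := (iInter_span_eq_span_iInf_of_antitone hL ((↑) : T → Ω)).subset
    (mem_iInter.2 fun n => by simpa using hxL n)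
  rw [Subtype.range_coe] at hxF
  exact span_subset hLM hTM hxF

theorem Subfield.exists_finite_subset_span {F M : Subfield Ω} (h : F ≤ M)
    (hfin : letI : Algebra F M := (Subfield.inclusion h).toAlgebra; Module.Finite F M) :
    ∃ T : Set Ω, T.Finite ∧ T ⊆ M ∧ (M : Set Ω) ⊆ span F T := by
  let _ : Algebra F M := (Subfield.inclusion h).toAlgebra
  obtain ⟨s, hs⟩ := hfin.fg_top
  let f : M →ₗ[F] Ω :=
    { toFun := (↑), map_add' := fun _ _ => rfl, map_smul' := fun _ _ => rfl }
  refine ⟨f '' s, s.finite_toSet.image f, ?_, fun x hx => ?_⟩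
  · rintro _ ⟨y, -, rfl⟩
    exact y.2
  · rw [← map_span, hs]
    exact ⟨⟨x, hx⟩, trivial, rfl⟩

end SubfieldSup

section Frobenius

variable (p : ℕ) {Ω : Type*} [Field Ω] [ExpChar Ω p]

theorem Subfield.antitone_map_iterateFrobenius (k : Subfield Ω) :
    Antitone fun n => k.map (iterateFrobenius Ω p n) := by
  intro a b hab
  rintro _ ⟨y, hy, rfl⟩
  refine ⟨y ^ p ^ (b - a), k.pow_mem hy _, ?_⟩
  simp only [iterateFrobenius_def, ← pow_mul, ← pow_add, Nat.sub_add_cancel hab]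

theorem Subfield.map_iterateFrobenius_of_perfectRing (K : Subfield Ω) [PerfectRing K p]
    (n : ℕ) :
    K.map (iterateFrobenius Ω p n) = K := by
  refine le_antisymm ?_ fun x hx => ?_
  · rintro _ ⟨y, hy, rfl⟩
    exact pow_mem hy _
  · obtain ⟨y, hy⟩ := (bijective_iterateFrobenius K p n).2 ⟨x, hx⟩
    exact ⟨y, y.2, congrArg Subtype.val hy⟩

end Frobenius

instance perfectRing_relMaxPerfect (p : ℕ) [Fact p.Prime] {Ω : Type*} [Field Ω] [CharP Ω p]
    (k : Subfield Ω) : PerfectRing (relMaxPerfect p Ω k) p := by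
  refine PerfectRing.ofSurjective _ p ?_
  rintro ⟨x, hx⟩
  have hmem : ∀ n, x ∈ k.map (iterateFrobenius Ω p n) := Subfield.mem_iInf.1 hx
  obtain ⟨z, hz, rfl⟩ := hmem 1
  refine ⟨⟨z, Subfield.mem_iInf.2 fun n => ?_⟩, Subtype.ext ?_⟩
  · obtain ⟨w, hw, hwz⟩ := hmem (n + 1)
    refine ⟨w, hw, frobenius_inj Ω p ?_⟩
    simpa [iterateFrobenius_def, frobenius_def, ← pow_mul, pow_succ] using hwz
  · simp [frobenius_def]

theorem maximalPerfect_of_compositum_general (p : ℕ) [Fact p.Prime]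
    (Ω : Type*) [Field Ω] [CharP Ω p]
    (k : Subfield Ω)
    (k' : Subfield Ω) (hle : relMaxPerfect p Ω k ≤ k')
    (hfin : letI : Algebra ↥(relMaxPerfect p Ω k) ↥k' := (Subfield.inclusion hle).toAlgebra;
      Module.Finite ↥(relMaxPerfect p Ω k) ↥k') :
    relMaxPerfect p Ω (k ⊔ k') = k' := by
  let _ : Algebra ↥(relMaxPerfect p Ω k) ↥k' := (Subfield.inclusion hle).toAlgebra
  have := PerfectRing.toPerfectField (relMaxPerfect p Ω k) p
  have : PerfectField k' := Algebra.IsAlgebraic.perfectField (K := relMaxPerfect p Ω k)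
  obtain ⟨T, hT, hTk', hk'T⟩ := Subfield.exists_finite_subset_span hle hfin
  have hsup : relMaxPerfect p Ω (k ⊔ k') = ⨅ n, (k.map (iterateFrobenius Ω p n) ⊔ k') :=
    iInf_congr fun n => by
      rw [Subfield.map_sup, Subfield.map_iterateFrobenius_of_perfectRing p k']
  rw [hsup]
  exact le_antisymm
    (Subfield.iInf_sup_le_of_antitone (Subfield.antitone_map_iterateFrobenius p k) k' hle
      hT hTk' hk'T)
    (le_iInf fun _ => le_sup_right)

/-- **Lemma 1.1(ii)**: let `k` be a field of characteristic `p > 0` with algebraic closure `k̄`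
(here `Ω`, algebraically closed and algebraic over `k`), and let `k' ⊆ k̄` be a finite extension
of `k^{p^∞}`.  Then the maximal perfect subfield of the compositum `kk'` equals `k'`. -/
theorem maximalPerfect_of_compositum (p : ℕ) [Fact p.Prime]
    (Ω : Type*) [Field Ω] [CharP Ω p] [IsAlgClosed Ω]
    (k : Subfield Ω) (halg : Algebra.IsAlgebraic k Ω)
    (k' : Subfield Ω) (hle : relMaxPerfect p Ω k ≤ k')
    (hfin : letI : Algebra ↥(relMaxPerfect p Ω k) ↥k' := (Subfield.inclusion hle).toAlgebra;
      Module.Finite ↥(relMaxPerfect p Ω k) ↥k') :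
    relMaxPerfect p Ω (k ⊔ k') = k' :=
  maximalPerfect_of_compositum_general p Ω k k' hle hfin
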